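/- arXiv:1010.3535 — 3 statements merged into one kernel-verified Lean document; each statement's English description precedes it below -/
import Mathlib

section
/- Conversely, if x ∈ K_s and for some p ≥ 0 there is a sequence of p-points (xᵏ) with xᵏ → x and L_p(xᵏ) → ∞, then π_m(x) ∈ ω(c) for every m ≥ 0. (Backward direction of Lemma 2.2.) -/
open Set Filter Topology

noncomputable section

/-- The tent map with slope `s`. -/
def tent (s x : ℝ) : ℝ := min (s * x) (s * (1 - x))

/-- The inverse limit `K_s = lim←([0, s/2], T_s)`, coded as sequences `x : ℕ → ℝ`
where `x n` represents the coordinate `x_{-n}`. -/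
def InvLim (s : ℝ) : Set (ℕ → ℝ) :=
  {x | (∀ n, x n ∈ Icc (0:ℝ) (s / 2)) ∧ ∀ n, tent s (x (n + 1)) = x n}

/-- The metric `d(x, y) = Σ_{n ≤ 0} 2ⁿ |x_n − y_n|` on the inverse limit. -/
def D (s : ℝ) (x y : InvLim s) : ℝ :=
  ∑' n : ℕ, (2 : ℝ)⁻¹ ^ n * |x.val n - y.val n|

/-- The omega-limit set of the critical point `c = 1/2` under `T_s`: the set of
accumulation points of the orbit `{cₙ : n ≥ 1}`. -/
def omegaC (s : ℝ) : Set ℝ :=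
  {y | ∀ ε > (0:ℝ), ∀ N : ℕ, ∃ n ≥ N, 1 ≤ n ∧ |(tent s)^[n] (1 / 2) - y| < ε}

/-! Each coordinate `x_{-m}` of a `p`-point `xᵏ` with `x_{-p-l} = c` is the orbit point
`c_{p+l-m}`. Since `L_p(xᵏ) → ∞`, these orbit times tend to infinity, while
`xᵏ_{-m} → x_{-m}` by convergence in the product topology; hence `x_{-m}` is an
accumulation point of the orbit of `c`. -/

lemma iterate_apply_add_of_backward_orbit {α : Type*} {f : α → α} {y : ℕ → α}
    (hy : ∀ n, f (y (n + 1)) = y n) (m j : ℕ) : f^[j] (y (m + j)) = y m := by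
  induction j with
  | zero => rfl
  | succ j ih => rw [Function.iterate_succ_apply, ← add_assoc, hy, ih]

lemma InvLim.coord_eq_iterate_of_coord_eq {s : ℝ} (y : InvLim s) {n m : ℕ} (hmn : m ≤ n)
    (hn : y.val n = 1 / 2) : y.val m = (tent s)^[n - m] (1 / 2) := by
  rw [← hn, ← iterate_apply_add_of_backward_orbit y.2.2 m (n - m), Nat.add_sub_cancel' hmn]

lemma InvLim.tendsto_coord {s : ℝ} {ι : Type*} {F : Filter ι} {y : ι → InvLim s}
    {x : InvLim s} (h : Tendsto y F (𝓝 x)) (m : ℕ) :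
    Tendsto (fun i => (y i).val m) F (𝓝 (x.val m)) :=
  ((continuous_apply m).comp continuous_subtype_val).continuousAt.tendsto.comp h

lemma mem_omegaC_of_tendsto {s a : ℝ} {n : ℕ → ℕ} (hn : Tendsto n atTop atTop)
    (ha : Tendsto (fun k => (tent s)^[n k] (1 / 2)) atTop (𝓝 a)) : a ∈ omegaC s := by
  intro ε hε N
  obtain ⟨k, hkε, hkN⟩ :=
    ((Metric.tendsto_nhds.mp ha ε hε).and (tendsto_atTop.mp hn (N + 1))).exists
  exact ⟨n k, by omega, by omega, hkε⟩

theorem coords_in_omega_of_p_point_limit_general (s : ℝ)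
    (x : InvLim s) (p : ℕ) (xk : ℕ → InvLim s) (l : ℕ → ℕ)
    (hpp : ∀ k, (xk k).val (p + l k) = 1 / 2 ∧ ∀ l' < l k, (xk k).val (p + l') ≠ 1 / 2)
    (hconv : Tendsto xk atTop (𝓝 x)) (hlev : Tendsto l atTop atTop) :
    ∀ m : ℕ, x.val m ∈ omegaC s := by
  intro m
  have htimes : Tendsto (fun k => p + l k - m) atTop atTop :=
    tendsto_atTop.mpr fun b => (tendsto_atTop.mp hlev (b + m)).mono fun k hk => by omega
  have hcoord_eq : ∀ᶠ k in atTop, (xk k).val m = (tent s)^[p + l k - m] (1 / 2) :=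
    (tendsto_atTop.mp hlev m).mono fun k hk =>
      InvLim.coord_eq_iterate_of_coord_eq (xk k) (by omega) (hpp k).1
  exact mem_omegaC_of_tendsto htimes ((InvLim.tendsto_coord hconv m).congr' hcoord_eq)

/-- Backward direction of Lemma 2.2: if there is a sequence of `p`-points `xᵏ → x`
with `p`-levels `L_p(xᵏ) → ∞`, then every coordinate of `x` lies in `ω(c)`. -/
theorem coords_in_omega_of_p_point_limit (s : ℝ) (hs : s ∈ Set.Ioc (1:ℝ) 2)
    (x : InvLim s) (p : ℕ) (xk : ℕ → InvLim s) (l : ℕ → ℕ)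
    (hpp : ∀ k, (xk k).val (p + l k) = 1 / 2 ∧ ∀ l' < l k, (xk k).val (p + l') ≠ 1 / 2)
    (hconv : Tendsto xk atTop (𝓝 x)) (hlev : Tendsto l atTop atTop) :
    ∀ m : ℕ, x.val m ∈ omegaC s :=
  coords_in_omega_of_p_point_limit_general s x p xk l hpp hconv hlev
end
end

section
/- For s ∈ (1, 2], for every ε > 0 the space K_s = lim←([0, s/2], T_s) admits a finite open cover {ℓ¹, ..., ℓⁿ} by sets of diameter < ε such that ℓⁱ ∩ ℓʲ ≠ ∅ if and only if |i − j| ≤ 1; that is, K_s is chainable. -/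
open Set Filter Topology

noncomputable section

/-! Every projection `K_s → [0, s/2]` is onto, so the standard chain of overlapping intervals
of `[0, s/2]` pulls back along the `N`-th projection to a chain of `K_s`. Since `T_s` is
`2`-Lipschitz, points whose `N`-th coordinates are `δ`-close have their first `N` coordinates
`2^N δ`-close, and the remaining coordinates contribute at most `2^{-N}` to `D`. -/

section IntervalChain

/-- For `i ≤ m`, the links of the chain of `[0, m h]` with step `h`. -/
def intervalLink (h : ℝ) (i : ℕ) : Set ℝ := Ioo ((i - 1) * h) ((i + 1) * h)

variable {h u v : ℝ}

lemma mem_intervalLink_floor (hh : 0 < h) (hu : 0 ≤ u) : u ∈ intervalLink h ⌊u / h⌋₊ := by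
  have hfloor := Nat.floor_le (div_nonneg hu hh.le)
  have hlt := Nat.lt_floor_add_one (u / h)
  rw [le_div_iff₀ hh] at hfloor
  rw [div_lt_iff₀ hh] at hlt
  constructor <;> nlinarith

lemma abs_sub_lt_of_mem_intervalLink {i : ℕ} (hu : u ∈ intervalLink h i)
    (hv : v ∈ intervalLink h i) : |u - v| < 2 * h := by
  rw [abs_sub_lt_iff]
  constructor <;> linarith [hu.1, hu.2, hv.1, hv.2]

lemma abs_sub_le_one_of_mem_intervalLink (hh : 0 < h) {i j : ℕ} (hi : u ∈ intervalLink h i)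
    (hj : u ∈ intervalLink h j) : |(i : ℤ) - j| ≤ 1 := by
  have hij : (i : ℝ) - 1 < j + 1 := lt_of_mul_lt_mul_right (hi.1.trans hj.2) hh.le
  have hji : (j : ℝ) - 1 < i + 1 := lt_of_mul_lt_mul_right (hj.1.trans hi.2) hh.le
  have hij' : i < j + 2 := by exact_mod_cast (by linarith : (i : ℝ) < j + 2)
  have hji' : j < i + 2 := by exact_mod_cast (by linarith : (j : ℝ) < i + 2)
  rw [abs_le]
  omega

lemma midpoint_mem_intervalLink (hh : 0 < h) {i j : ℕ} (hij : |(i : ℤ) - j| ≤ 1) :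
    (i + j) * h / 2 ∈ intervalLink h i ∩ intervalLink h j := by
  rw [abs_le] at hij
  have hij' : (i : ℝ) ≤ j + 1 := by exact_mod_cast (by omega : i ≤ j + 1)
  have hji' : (j : ℝ) ≤ i + 1 := by exact_mod_cast (by omega : j ≤ i + 1)
  refine ⟨⟨?_, ?_⟩, ?_, ?_⟩ <;> nlinarith

theorem exists_chain_of_range_eq_Icc {X : Type*} [TopologicalSpace X] {p : X → ℝ}
    (hp : Continuous p) {L : ℝ} (hL : 0 < L) (hrange : range p = Icc 0 L) {δ : ℝ}
    (hδ : 0 < δ) :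
    ∃ (n : ℕ) (ℓ : Fin n → Set X),
      (∀ i, IsOpen (ℓ i)) ∧
      (⋃ i, ℓ i) = univ ∧
      (∀ i, ∀ x ∈ ℓ i, ∀ y ∈ ℓ i, |p x - p y| < δ) ∧
      (∀ i j, (ℓ i ∩ ℓ j).Nonempty ↔ |(i : ℤ) - (j : ℤ)| ≤ 1) := by
  obtain ⟨m, hm⟩ := exists_nat_gt (2 * L / δ)
  have hm0 : (0 : ℝ) < m := (by positivity : 0 < 2 * L / δ).trans hm
  set h := L / m with h_def
  have hh : 0 < h := by positivity
  have hmh : m * h = L := mul_div_cancel₀ L hm0.ne'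
  have h2h : 2 * h < δ := by
    rw [div_lt_iff₀ hδ] at hm
    rw [h_def, ← mul_div_assoc, div_lt_iff₀ hm0]
    linarith
  refine ⟨m + 1, fun i => p ⁻¹' intervalLink h i, fun i => isOpen_Ioo.preimage hp, ?_,
    fun i x hx y hy => (abs_sub_lt_of_mem_intervalLink hx hy).trans h2h, fun i j => ⟨?_, ?_⟩⟩
  · refine eq_univ_of_forall fun x => mem_iUnion.2 ?_
    have hx : p x ∈ Icc 0 L := hrange ▸ mem_range_self x
    have hfloor : ⌊p x / h⌋₊ < m + 1 :=
      Nat.lt_succ_of_le (Nat.floor_le_of_le ((div_le_iff₀ hh).2 (hmh ▸ hx.2)))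
    exact ⟨⟨_, hfloor⟩, mem_intervalLink_floor hh hx.1⟩
  · rintro ⟨x, hxi, hxj⟩
    exact abs_sub_le_one_of_mem_intervalLink hh hxi hxj
  · intro hij
    have hi : (i : ℝ) ≤ m := by exact_mod_cast Nat.lt_succ_iff.1 i.2
    have hj : (j : ℝ) ≤ m := by exact_mod_cast Nat.lt_succ_iff.1 j.2
    have hmid : ((i : ℕ) + (j : ℕ)) * h / 2 ∈ range p := by
      rw [hrange, ← hmh]
      constructor <;> nlinarith
    obtain ⟨x, hx⟩ := hmid
    refine ⟨x, ?_⟩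
    rw [← preimage_inter, mem_preimage, hx]
    exact midpoint_mem_intervalLink hh hij

end IntervalChain

section TentMap

variable {s : ℝ}

lemma abs_tent_sub_tent_le (hs : 0 ≤ s) (a b : ℝ) :
    |tent s a - tent s b| ≤ s * |a - b| := by
  calc |tent s a - tent s b| ≤ max |s * a - s * b| |s * (1 - a) - s * (1 - b)| :=
        abs_min_sub_min_le_max _ _ _ _
    _ = s * |a - b| := by
        rw [← mul_sub, ← mul_sub, sub_sub_sub_cancel_left, abs_mul, abs_mul, abs_sub_comm b,
          abs_of_nonneg hs, max_self]

lemma tent_mapsTo (hs0 : 0 ≤ s) (hs2 : s ≤ 2) :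
    MapsTo (tent s) (Icc 0 (s / 2)) (Icc 0 (s / 2)) := by
  rintro a ⟨ha0, ha1⟩
  refine ⟨le_min (by nlinarith) (by nlinarith), ?_⟩
  rcases le_or_gt a (1 / 2) with h | h
  · exact (min_le_left _ _).trans (by nlinarith)
  · exact (min_le_right _ _).trans (by nlinarith)

lemma tent_div_self (hs : 0 < s) {a : ℝ} (ha : a ≤ s / 2) : tent s (a / s) = a := by
  rw [tent, mul_div_cancel₀ _ hs.ne', mul_sub, mul_one, mul_div_cancel₀ _ hs.ne']
  exact min_eq_left (by linarith)

end TentMap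

lemma tsum_inv_two_pow_tail_mul_le {f : ℕ → ℝ} (hf0 : ∀ n, 0 ≤ f n) (hf1 : ∀ n, f n ≤ 1)
    (N : ℕ) :
    ∑' i, (2 : ℝ)⁻¹ ^ (i + (N + 1)) * f (i + (N + 1)) ≤ (2 : ℝ)⁻¹ ^ N := by
  have hg : Summable fun i : ℕ => (2 : ℝ)⁻¹ ^ (i + (N + 1)) :=
    (summable_nat_add_iff (N + 1)).2
      (summable_geometric_of_lt_one (by norm_num) (by norm_num : (2 : ℝ)⁻¹ < 1))
  have hle : ∀ i : ℕ,
      (2 : ℝ)⁻¹ ^ (i + (N + 1)) * f (i + (N + 1)) ≤ (2 : ℝ)⁻¹ ^ (i + (N + 1)) :=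
    fun i => mul_le_of_le_one_right (by positivity) (hf1 _)
  calc ∑' i, (2 : ℝ)⁻¹ ^ (i + (N + 1)) * f (i + (N + 1))
      ≤ ∑' i, (2 : ℝ)⁻¹ ^ (i + (N + 1)) :=
        (hg.of_nonneg_of_le (fun i => mul_nonneg (by positivity) (hf0 _)) hle).tsum_le_tsum hle hg
    _ = (2 : ℝ)⁻¹ ^ N := by
        simp_rw [pow_add, tsum_mul_right, tsum_geometric_inv_two, pow_succ]
        ring

namespace InvLim

variable {s : ℝ}

lemma abs_sub_le_pow_mul_abs_sub (hs : 0 ≤ s) (x y : InvLim s) (n k : ℕ) :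
    |x.val n - y.val n| ≤ s ^ k * |x.val (n + k) - y.val (n + k)| := by
  induction k with
  | zero => simp
  | succ k ih =>
    calc |x.val n - y.val n| ≤ s ^ k * |x.val (n + k) - y.val (n + k)| := ih
      _ = s ^ k * |tent s (x.val (n + k + 1)) - tent s (y.val (n + k + 1))| := by
          rw [x.2.2, y.2.2]
      _ ≤ s ^ k * (s * |x.val (n + k + 1) - y.val (n + k + 1)|) := by
          gcongr; exact abs_tent_sub_tent_le hs _ _
      _ = s ^ (k + 1) * |x.val (n + (k + 1)) - y.val (n + (k + 1))| := by ring_nf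

lemma abs_sub_le_one (hs : s ≤ 2) (x y : InvLim s) (n : ℕ) : |x.val n - y.val n| ≤ 1 := by
  have hx := x.2.1 n
  have hy := y.2.1 n
  rw [abs_sub_le_iff]
  constructor <;> linarith [hx.1, hx.2, hy.1, hy.2]

/-- The point whose `N`-th coordinate is `t`: above `N` it follows the branch
`u ↦ u / s` of `T_s⁻¹`, below `N` it is forced by `T_s`. -/
def lift (s : ℝ) (N : ℕ) (t : ℝ) (n : ℕ) : ℝ := (tent s)^[N - n] (t / s ^ (n - N))

lemma lift_mem_invLim (hs1 : 1 ≤ s) (hs2 : s ≤ 2) (N : ℕ) {t : ℝ}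
    (ht : t ∈ Icc 0 (s / 2)) :
    lift s N t ∈ InvLim s := by
  have hs0 : 0 < s := by linarith
  have hdiv : ∀ k, t / s ^ k ∈ Icc 0 (s / 2) := fun k =>
    ⟨div_nonneg ht.1 (by positivity), (div_le_self ht.1 (one_le_pow₀ hs1)).trans ht.2⟩
  refine ⟨fun n => (tent_mapsTo hs0.le hs2).iterate _ (hdiv _), fun n => ?_⟩
  rcases lt_or_ge n N with hn | hn
  · rw [lift, lift, show N - n = N - (n + 1) + 1 by omega, Function.iterate_succ_apply',
      show n + 1 - N = n - N by omega]
  · rw [lift, lift, show N - (n + 1) = 0 by omega, show N - n = 0 by omega,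
      show n + 1 - N = n - N + 1 by omega, pow_succ, ← div_div]
    exact tent_div_self hs0 (hdiv _).2

lemma range_eval (hs1 : 1 ≤ s) (hs2 : s ≤ 2) (N : ℕ) :
    range (fun x : InvLim s => x.val N) = Icc 0 (s / 2) := by
  refine (range_subset_iff.2 fun x => x.2.1 N).antisymm fun t ht => ?_
  exact ⟨⟨lift s N t, lift_mem_invLim hs1 hs2 N ht⟩, by simp [lift]⟩

lemma summable_D (hs : s ≤ 2) (x y : InvLim s) :
    Summable fun n : ℕ => (2 : ℝ)⁻¹ ^ n * |x.val n - y.val n| :=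
  (summable_geometric_of_lt_one (by norm_num) (by norm_num : (2 : ℝ)⁻¹ < 1)).of_nonneg_of_le
    (fun n => by positivity) fun n =>
      mul_le_of_le_one_right (by positivity) (abs_sub_le_one hs x y n)

lemma D_le (hs0 : 0 ≤ s) (hs2 : s ≤ 2) (x y : InvLim s) (N : ℕ) :
    D s x y ≤ (N + 1) * 2 ^ N * |x.val N - y.val N| + (2 : ℝ)⁻¹ ^ N := by
  have head : ∀ i ∈ Finset.range (N + 1),
      (2 : ℝ)⁻¹ ^ i * |x.val i - y.val i| ≤ 2 ^ N * |x.val N - y.val N| := by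
    intro i hi
    have hiN : i + (N - i) = N := by simp only [Finset.mem_range] at hi; omega
    have hsN : s ^ (N - i) ≤ 2 ^ N := (pow_le_pow_left₀ hs0 hs2 _).trans
      (pow_le_pow_right₀ (by norm_num) (Nat.sub_le N i))
    calc (2 : ℝ)⁻¹ ^ i * |x.val i - y.val i| ≤ |x.val i - y.val i| :=
          mul_le_of_le_one_left (abs_nonneg _) (pow_le_one₀ (by norm_num) (by norm_num))
      _ ≤ s ^ (N - i) * |x.val N - y.val N| := by
          simpa only [hiN] using abs_sub_le_pow_mul_abs_sub hs0 x y i (N - i)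
      _ ≤ 2 ^ N * |x.val N - y.val N| := by gcongr
  rw [D, ← (summable_D hs2 x y).sum_add_tsum_nat_add (N + 1)]
  refine add_le_add ((Finset.sum_le_sum head).trans_eq ?_)
    (tsum_inv_two_pow_tail_mul_le (fun n => abs_nonneg _) (abs_sub_le_one hs2 x y) N)
  rw [Finset.sum_const, Finset.card_range, nsmul_eq_mul]
  push_cast
  ring

end InvLim

/-- `K_s` is chainable: for every `ε > 0` there is a finite open cover by links of
`D`-diameter `< ε` in which two links intersect exactly when they are adjacent. -/
theorem invLim_chainable (s : ℝ) (hs : s ∈ Set.Ioc (1:ℝ) 2) :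
    ∀ ε > (0:ℝ), ∃ (n : ℕ) (ℓ : Fin n → Set (InvLim s)),
      (∀ i, IsOpen (ℓ i)) ∧
      (⋃ i, ℓ i) = Set.univ ∧
      (∀ i, ∀ x ∈ ℓ i, ∀ y ∈ ℓ i, D s x y < ε) ∧
      (∀ i j, (ℓ i ∩ ℓ j).Nonempty ↔ |(i : ℤ) - (j : ℤ)| ≤ 1) := by
  intro ε hε
  obtain ⟨N, hN⟩ := exists_pow_lt_of_lt_one (half_pos hε) (by norm_num : (2 : ℝ)⁻¹ < 1)
  have hC : (0 : ℝ) < (N + 1) * 2 ^ N := by positivity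
  obtain ⟨n, ℓ, hopen, hcover, hsmall, hadj⟩ :=
    exists_chain_of_range_eq_Icc ((continuous_apply N).comp continuous_subtype_val)
      (by linarith [hs.1]) (InvLim.range_eval hs.1.le hs.2 N) (div_pos (half_pos hε) hC)
  refine ⟨n, ℓ, hopen, hcover, fun i x hx y hy => ?_, hadj⟩
  calc D s x y ≤ (N + 1) * 2 ^ N * |x.val N - y.val N| + (2 : ℝ)⁻¹ ^ N :=
        InvLim.D_le (by linarith [hs.1]) hs.2 x y N
    _ < (N + 1) * 2 ^ N * (ε / 2 / ((N + 1) * 2 ^ N)) + ε / 2 := by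
        gcongr; exact hsmall i x hx y hy
    _ = ε := by field_simp; ring
end
end

section
/- Let A ⊂ K_s be an arc (homeomorphic image of [0,1]) containing only finitely many p-points for some fixed p. Then there exists m ∈ ℕ such that the projection π_m restricted to A is injective. -/
open Set Filter Topology

noncomputable section

/-!
If `π_m` identifies `f a ≠ f b` with `m ≥ p`, then at their first level of disagreement `n > m` the
tent map has folded them onto opposite sides of `c = 1/2`, so the `n`-th coordinate crosses `c`
strictly between `a` and `b`: the interval `(a, b)` contains one of the finitely many `p`-points.
By compactness, a single level separates all pairs with `b - a ≥ δ`. Near an isolated `p`-point `τ`,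
one pair `(a₀, b₀)` identified at level `p` pins down on which side of `c` the relevant coordinate
lies left and right of `τ`, so pairs straddling `τ` inside `(a₀, b₀)` are separated from some level on.
-/

def IsPPoint (p : ℕ) (x : ℕ → ℝ) : Prop := ∃ l : ℕ, x (p + l) = 1 / 2

lemma isPPoint_of_le {p n : ℕ} {x : ℕ → ℝ} (hpn : p ≤ n) (hx : x n = 1 / 2) : IsPPoint p x :=
  ⟨n - p, by rwa [Nat.add_sub_cancel' hpn]⟩

lemma InvLim.apply_eq_of_le {s : ℝ} {x y : ℕ → ℝ} (hx : x ∈ InvLim s) (hy : y ∈ InvLim s)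
    {m n : ℕ} (hnm : n ≤ m) (h : x m = y m) : x n = y n := by
  induction m, hnm using Nat.le_induction with
  | base => exact h
  | succ m _ ih => exact ih (by rw [← hx.2 m, ← hy.2 m, h])

lemma sub_half_mul_sub_half_neg_of_tent_eq {s α β : ℝ} (hs : 0 < s) (hne : α ≠ β)
    (h : tent s α = tent s β) : (α - 1 / 2) * (β - 1 / 2) < 0 := by
  have hmin : min α (1 - α) = min β (1 - β) := by
    simp only [tent, ← mul_min_of_nonneg _ _ hs.le] at h
    exact mul_left_cancel₀ hs.ne' h
  rcases le_total α (1 / 2) with hα | hα <;> rcases le_total β (1 / 2) with hβ | hβ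
  · rw [min_eq_left (by linarith), min_eq_left (by linarith)] at hmin
    exact absurd hmin hne
  · rw [min_eq_left (by linarith), min_eq_right (by linarith)] at hmin
    have : α ≠ 1 / 2 := by rintro rfl; exact hne (by linarith)
    nlinarith [lt_of_le_of_ne hα this]
  · rw [min_eq_right (by linarith), min_eq_left (by linarith)] at hmin
    have : β ≠ 1 / 2 := by rintro rfl; exact hne (by linarith)
    nlinarith [lt_of_le_of_ne hβ this]
  · rw [min_eq_right (by linarith), min_eq_right (by linarith)] at hmin
    exact absurd (by linarith) hne

lemma InvLim.exists_lt_sub_half_mul_neg {s : ℝ} (hs : 0 < s) {x y : ℕ → ℝ}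
    (hx : x ∈ InvLim s) (hy : y ∈ InvLim s) (hne : x ≠ y) {m : ℕ} (h : x m = y m) :
    ∃ n > m, (x n - 1 / 2) * (y n - 1 / 2) < 0 := by
  classical
  have hex : ∃ n, x n ≠ y n := Function.ne_iff.mp hne
  set n := Nat.find hex
  have hmn : m < n := by
    by_contra! hnm
    exact Nat.find_spec hex (apply_eq_of_le hx hy hnm h)
  obtain ⟨k, hk⟩ : ∃ k, n = k + 1 := Nat.exists_eq_succ_of_ne_zero (by omega)
  refine ⟨n, hmn, sub_half_mul_sub_half_neg_of_tent_eq hs (Nat.find_spec hex) ?_⟩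
  rw [hk, hx.2, hy.2]
  exact not_not.mp (Nat.find_min hex (by omega))

lemma exists_mem_Ioo_eq_zero_of_mul_neg {G : ℝ → ℝ} (hG : Continuous G) {a b : ℝ} (hab : a ≤ b)
    (h : G a * G b < 0) : ∃ t ∈ Ioo a b, G t = 0 := by
  rcases mul_neg_iff.mp h with ⟨ha, hb⟩ | ⟨ha, hb⟩
  · exact intermediate_value_Ioo' hab hG.continuousOn ⟨hb, ha⟩
  · exact intermediate_value_Ioo hab hG.continuousOn ⟨ha, hb⟩

lemma mul_pos_of_forall_mem_Icc_ne_zero {G : ℝ → ℝ} (hG : Continuous G) {a b : ℝ} (hab : a ≤ b)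
    (h : ∀ t ∈ Icc a b, G t ≠ 0) : 0 < G a * G b := by
  by_contra! hle
  rcases hle.lt_or_eq with hneg | hzero
  · obtain ⟨t, ht, hGt⟩ := exists_mem_Ioo_eq_zero_of_mul_neg hG hab hneg
    exact h t (Ioo_subset_Icc_self ht) hGt
  · rcases mul_eq_zero.mp hzero with ha | hb
    · exact h a (left_mem_Icc.mpr hab) ha
    · exact h b (right_mem_Icc.mpr hab) hb

section Path

variable {s : ℝ} {γ : ℝ → ℕ → ℝ}

lemma exists_isPPoint_mem_Ioo_of_apply_eq (hs : 0 < s) (hγs : ∀ t, γ t ∈ InvLim s)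
    (hγ : Continuous γ) {a b : ℝ} (hab : a ≤ b) (hne : γ a ≠ γ b) {p m : ℕ} (hpm : p ≤ m)
    (h : γ a m = γ b m) : ∃ t ∈ Ioo a b, IsPPoint p (γ t) := by
  obtain ⟨n, hmn, hfold⟩ := InvLim.exists_lt_sub_half_mul_neg hs (hγs a) (hγs b) hne h
  obtain ⟨t, ht, hzero⟩ := exists_mem_Ioo_eq_zero_of_mul_neg
    (((continuous_apply n).comp hγ).sub continuous_const) hab hfold
  exact ⟨t, ht, isPPoint_of_le (hpm.trans hmn.le) (sub_eq_zero.mp hzero)⟩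

lemma eventually_apply_ne_of_add_le (hγs : ∀ t, γ t ∈ InvLim s) (hγ : Continuous γ)
    (hinj : InjOn γ (Icc 0 1)) {δ : ℝ} (hδ : 0 < δ) :
    ∀ᶠ m in atTop, ∀ a ∈ Icc (0:ℝ) 1, ∀ b ∈ Icc (0:ℝ) 1, a + δ ≤ b → γ a m ≠ γ b m := by
  set K : Set (ℝ × ℝ) := (Icc 0 1 ×ˢ Icc 0 1) ∩ {q | q.1 + δ ≤ q.2}
  have hK : IsCompact K := (isCompact_Icc.prod isCompact_Icc).inter_right
    (isClosed_le (continuous_fst.add continuous_const) continuous_snd)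
  let U : ℕ → Set (ℝ × ℝ) := fun m => {q | γ q.1 m ≠ γ q.2 m}
  have hU : ∀ m, IsOpen (U m) := fun m =>
    isOpen_ne_fun ((continuous_apply m).comp (hγ.comp continuous_fst))
      ((continuous_apply m).comp (hγ.comp continuous_snd))
  have hUmono : Monotone U := fun n m hnm q hq heq =>
    hq (InvLim.apply_eq_of_le (hγs _) (hγs _) hnm heq)
  have hKU : K ⊆ ⋃ m, U m := by
    rintro ⟨a, b⟩ ⟨⟨ha, hb⟩, hab⟩
    have hne : γ a ≠ γ b := hinj.ne ha hb (by change a + δ ≤ b at hab; linarith)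
    simpa [U] using Function.ne_iff.mp hne
  obtain ⟨m₀, hm₀⟩ := hK.elim_directed_cover U hU hKU hUmono.directed_le
  filter_upwards [eventually_ge_atTop m₀] with m hm a ha b hb hab
  exact hUmono hm (hm₀ (show (a, b) ∈ K from ⟨⟨ha, hb⟩, hab⟩))

/-- With `n` the first level where `γ a₀` and `γ b₀` differ, `γ · n - 1/2` keeps the sign it has at
`a₀` on `[a₀, τ)` and the opposite sign it has at `b₀` on `(τ, b₀]`: its zeros are `p`-points. -/
lemma eventually_apply_ne_of_fold_pair (hs : 0 < s) (hγs : ∀ t, γ t ∈ InvLim s)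
    (hγ : Continuous γ) {p : ℕ} {τ a₀ b₀ : ℝ}
    (hiso : ∀ t ∈ Icc a₀ b₀, IsPPoint p (γ t) → t = τ) (hne : γ a₀ ≠ γ b₀)
    (heq : γ a₀ p = γ b₀ p) :
    ∀ᶠ m in atTop, ∀ a b, a₀ < a → a < τ → τ < b → b < b₀ → γ a m ≠ γ b m := by
  obtain ⟨n, hpn, hfold⟩ := InvLim.exists_lt_sub_half_mul_neg hs (hγs a₀) (hγs b₀) hne heq
  set G : ℝ → ℝ := fun t => γ t n - 1 / 2
  have hG : Continuous G := ((continuous_apply n).comp hγ).sub continuous_const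
  have hGne : ∀ t ∈ Icc a₀ b₀, t ≠ τ → G t ≠ 0 := fun t ht htτ hzero =>
    htτ (hiso t ht (isPPoint_of_le hpn.le (sub_eq_zero.mp hzero)))
  filter_upwards [eventually_ge_atTop n] with m hm a b ha₀a haτ hτb hbb₀ heqm
  have hab : G a = G b := by simp only [G, InvLim.apply_eq_of_le (hγs a) (hγs b) hm heqm]
  have hleft : 0 < G a₀ * G a := mul_pos_of_forall_mem_Icc_ne_zero hG ha₀a.le fun t ht =>
    hGne t ⟨ht.1, by linarith [ht.2]⟩ (by linarith [ht.2])
  have hright : 0 < G b * G b₀ := mul_pos_of_forall_mem_Icc_ne_zero hG hbb₀.le fun t ht =>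
    hGne t ⟨by linarith [ht.1], ht.2⟩ (by linarith [ht.1])
  have hprod := mul_pos hleft hright
  have hfold' : G a₀ * G b₀ < 0 := hfold
  rw [hab] at hprod
  nlinarith [mul_nonneg (sq_nonneg (G b)) (neg_nonneg.mpr hfold'.le)]

lemma exists_window_eventually_apply_ne (hs : 0 < s) (hγs : ∀ t, γ t ∈ InvLim s)
    (hγ : Continuous γ) (hinj : InjOn γ (Icc 0 1)) {p : ℕ}
    (hP : {t ∈ Icc (0:ℝ) 1 | IsPPoint p (γ t)}.Finite) (τ : ℝ) :
    ∃ a₀ < τ, ∃ b₀ > τ, ∀ᶠ m in atTop, ∀ a ∈ Icc (0:ℝ) 1, ∀ b ∈ Icc (0:ℝ) 1,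
      a₀ < a → a < τ → τ < b → b < b₀ → γ a m ≠ γ b m := by
  obtain ⟨δ, hδ, hball⟩ := Metric.mem_nhds_iff.mp
    ((hP.sdiff (t := {τ})).isClosed.compl_mem_nhds fun h => h.2 rfl)
  rw [Real.ball_eq_Ioo] at hball
  have hiso : ∀ t ∈ Icc (0:ℝ) 1, IsPPoint p (γ t) → t ∈ Ioo (τ - δ) (τ + δ) → t = τ :=
    fun t ht hpt htδ => by_contra fun hne => hball htδ ⟨⟨ht, hpt⟩, hne⟩
  by_cases hpair : ∃ a₀ ∈ Icc (0:ℝ) 1, ∃ b₀ ∈ Icc (0:ℝ) 1,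
      τ - δ < a₀ ∧ a₀ < τ ∧ τ < b₀ ∧ b₀ < τ + δ ∧ γ a₀ p = γ b₀ p
  · obtain ⟨a₀, ha₀, b₀, hb₀, hδa₀, ha₀τ, hτb₀, hb₀δ, heq⟩ := hpair
    refine ⟨a₀, ha₀τ, b₀, hτb₀, ?_⟩
    have hiso' : ∀ t ∈ Icc a₀ b₀, IsPPoint p (γ t) → t = τ := fun t ht hpt =>
      hiso t ⟨ha₀.1.trans ht.1, ht.2.trans hb₀.2⟩ hpt ⟨by linarith [ht.1], by linarith [ht.2]⟩
    filter_upwards [eventually_apply_ne_of_fold_pair hs hγs hγ hiso'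
      (hinj.ne ha₀ hb₀ (by linarith)) heq] with m hm a _ b _ using hm a b
  · refine ⟨τ - δ, by linarith, τ + δ, by linarith, ?_⟩
    filter_upwards [eventually_ge_atTop p] with m hm a ha b hb hδa haτ hτb hbδ heq
    exact hpair ⟨a, ha, b, hb, hδa, haτ, hτb, hbδ, InvLim.apply_eq_of_le (hγs a) (hγs b) hm heq⟩

lemma eventually_apply_ne_of_lt_of_lt (hs : 0 < s) (hγs : ∀ t, γ t ∈ InvLim s)
    (hγ : Continuous γ) (hinj : InjOn γ (Icc 0 1)) {p : ℕ}
    (hP : {t ∈ Icc (0:ℝ) 1 | IsPPoint p (γ t)}.Finite) (τ : ℝ) :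
    ∀ᶠ m in atTop, ∀ a ∈ Icc (0:ℝ) 1, ∀ b ∈ Icc (0:ℝ) 1, a < τ → τ < b → γ a m ≠ γ b m := by
  obtain ⟨a₀, ha₀, b₀, hb₀, hnear⟩ := exists_window_eventually_apply_ne hs hγs hγ hinj hP τ
  set δ := min (τ - a₀) (b₀ - τ)
  filter_upwards [hnear, eventually_apply_ne_of_add_le hγs hγ hinj
    (lt_min (sub_pos.2 ha₀) (sub_pos.2 hb₀) : 0 < δ)] with m hnear hfar a ha b hb haτ hτb
  by_cases hin : a₀ < a ∧ b < b₀
  · exact hnear a ha b hb hin.1 haτ hτb hin.2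
  · refine hfar a ha b hb ?_
    have h₁ : δ ≤ τ - a₀ := min_le_left _ _
    have h₂ : δ ≤ b₀ - τ := min_le_right _ _
    rw [not_and_or, not_lt, not_lt] at hin
    rcases hin with h | h <;> linarith

theorem exists_injOn_apply (hs : 0 < s) (hγs : ∀ t, γ t ∈ InvLim s)
    (hγ : Continuous γ) (hinj : InjOn γ (Icc 0 1)) {p : ℕ}
    (hP : {t ∈ Icc (0:ℝ) 1 | IsPPoint p (γ t)}.Finite) :
    ∃ m, InjOn (fun t => γ t m) (Icc 0 1) := by
  obtain ⟨m, hpm, hm⟩ := ((eventually_ge_atTop p).and ((eventually_all_finite hP).2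
    fun τ _ => eventually_apply_ne_of_lt_of_lt hs hγs hγ hinj hP τ)).exists
  have hlt : ∀ a ∈ Icc (0:ℝ) 1, ∀ b ∈ Icc (0:ℝ) 1, a < b → γ a m ≠ γ b m := by
    intro a ha b hb hab heq
    obtain ⟨τ, hτ, hpτ⟩ := exists_isPPoint_mem_Ioo_of_apply_eq hs hγs hγ hab.le
      (hinj.ne ha hb hab.ne) hpm heq
    exact hm τ ⟨⟨ha.1.trans hτ.1.le, hτ.2.le.trans hb.2⟩, hpτ⟩ a ha b hb hτ.1 hτ.2 heq
  refine ⟨m, fun a ha b hb heq => ?_⟩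
  rcases lt_trichotomy a b with h | h | h
  · exact absurd heq (hlt a ha b hb h)
  · exact h
  · exact absurd heq.symm (hlt b hb a ha h)

end Path

/-- If an arc `A ⊆ K_s` contains only finitely many `p`-points for some fixed `p`,
then some projection `π_m` is injective on `A`. -/
theorem projection_injective_on_arc (s : ℝ) (hs : s ∈ Set.Ioc (1:ℝ) 2)
    (A : Set (InvLim s))
    (harc : ∃ f : Set.Icc (0:ℝ) 1 → InvLim s,
      Continuous f ∧ Function.Injective f ∧ Set.range f = A)
    (p : ℕ)
    (hfin : {x ∈ A | ∃ l : ℕ, x.val (p + l) = 1 / 2}.Finite) :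
    ∃ m : ℕ, Set.InjOn (fun x : InvLim s => x.val m) A := by
  obtain ⟨f, hfc, hfi, rfl⟩ := harc
  set γ : ℝ → ℕ → ℝ := fun t => (f (projIcc 0 1 zero_le_one t)).val
  have hγf : ∀ t : Icc (0:ℝ) 1, γ t = (f t).val := fun t => by simp only [γ, projIcc_val]
  have hinj : InjOn γ (Icc 0 1) := fun a ha b hb h =>
    congrArg Subtype.val (hfi (Subtype.ext (by rwa [← hγf ⟨a, ha⟩, ← hγf ⟨b, hb⟩])) :
      (⟨a, ha⟩ : Icc (0:ℝ) 1) = ⟨b, hb⟩)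
  have hP : {t ∈ Icc (0:ℝ) 1 | IsPPoint p (γ t)}.Finite :=
    ((hfin.preimage hfi.injOn).image Subtype.val).subset fun t ⟨ht, hpt⟩ =>
      ⟨⟨t, ht⟩, ⟨mem_range_self _, by rwa [← hγf ⟨t, ht⟩]⟩, rfl⟩
  obtain ⟨m, hm⟩ := exists_injOn_apply (γ := γ) (zero_lt_one.trans hs.1) (fun t => (f _).2)
    (continuous_subtype_val.comp (hfc.comp continuous_projIcc)) hinj hP
  refine ⟨m, ?_⟩
  rintro _ ⟨a, rfl⟩ _ ⟨b, rfl⟩ h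
  exact congrArg f (Subtype.ext (hm a.2 b.2 (show γ a m = γ b m by rw [hγf, hγf]; exact h)))
end
end
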